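/- arXiv:math/0407162 — 11 statements merged into one kernel-verified Lean document; each statement's English description precedes it below -/
import Mathlib

section
/- If (A, ≺, ≻, •) is an NS-algebra, then the operation x⋆y := x≺y + x≻y + x•y is associative. -/
/-- In an NS-algebra, `x ⋆ y := x ≺ y + x ≻ y + x • y` is associative. -/
theorem NS_star_assoc {K A : Type*} [Field K] [AddCommGroup A] [Module K A]
    (pre suc bul : A →ₗ[K] A →ₗ[K] A)
    (h1 : ∀ x y z : A, pre (pre x y) z = pre x (pre y z + suc y z + bul y z))
    (h2 : ∀ x y z : A, pre (suc x y) z = suc x (pre y z))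
    (h3 : ∀ x y z : A, suc (pre x y + suc x y + bul x y) z = suc x (suc y z))
    (h4 : ∀ x y z : A, bul (pre x y + suc x y + bul x y) z + pre (bul x y) z =
            suc x (bul y z) + bul x (pre y z + suc y z + bul y z)) :
    ∀ x y z : A,
      pre (pre x y + suc x y + bul x y) z + suc (pre x y + suc x y + bul x y) z
        + bul (pre x y + suc x y + bul x y) z =
      pre x (pre y z + suc y z + bul y z) + suc x (pre y z + suc y z + bul y z)
        + bul x (pre y z + suc y z + bul y z) := by
  intro x y z
  have H4 : bul (pre x y + suc x y + bul x y) z =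
      suc x (bul y z) + bul x (pre y z + suc y z + bul y z) - pre (bul x y) z := by
    rw [eq_sub_iff_add_eq]; exact h4 x y z
  simp only [map_add, LinearMap.add_apply] at *
  rw [h1, h2, h3, H4]
  abel
end

section
/- Let D₁ and D₂ be dendriform dialgebras. On D₁ ⊗ D₂ define four operations by (a₁⊗a₂) ↖ (b₁⊗b₂) = (a₁≺b₁)⊗(a₂≺b₂), (a₁⊗a₂) ↗ (b₁⊗b₂) = (a₁≺b₁)⊗(a₂≻b₂), (a₁⊗a₂) ↙ (b₁⊗b₂) = (a₁≻b₁)⊗(a₂≺b₂), (a₁⊗a₂) ↘ (b₁⊗b₂) = (a₁≻b₁)⊗(a₂≻b₂). Then (D₁⊗D₂, ↖, ↗, ↙, ↘) is a quadri-algebra. -/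
open TensorProduct

/-- The tensor product of two dendriform dialgebras, with the four
operations `(a₁⊗a₂) ⟨⊙₁,⊙₂⟩ (b₁⊗b₂) = (a₁⊙₁b₁)⊗(a₂⊙₂b₂)`, is a quadri-algebra. -/
theorem tensor_of_dendriform_is_quadri {K D₁ D₂ : Type*} [Field K]
    [AddCommGroup D₁] [Module K D₁] [AddCommGroup D₂] [Module K D₂]
    (pre₁ suc₁ : D₁ →ₗ[K] D₁ →ₗ[K] D₁) (pre₂ suc₂ : D₂ →ₗ[K] D₂ →ₗ[K] D₂)
    (h11 : ∀ x y z : D₁, pre₁ (pre₁ x y) z = pre₁ x (pre₁ y z + suc₁ y z))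
    (h12 : ∀ x y z : D₁, pre₁ (suc₁ x y) z = suc₁ x (pre₁ y z))
    (h13 : ∀ x y z : D₁, suc₁ (pre₁ x y + suc₁ x y) z = suc₁ x (suc₁ y z))
    (h21 : ∀ x y z : D₂, pre₂ (pre₂ x y) z = pre₂ x (pre₂ y z + suc₂ y z))
    (h22 : ∀ x y z : D₂, pre₂ (suc₂ x y) z = suc₂ x (pre₂ y z))
    (h23 : ∀ x y z : D₂, suc₂ (pre₂ x y + suc₂ x y) z = suc₂ x (suc₂ y z)) :
    -- the four operations on D₁ ⊗ D₂
    ∀ (nw ne sw se : D₁ ⊗[K] D₂ →ₗ[K] D₁ ⊗[K] D₂ →ₗ[K] D₁ ⊗[K] D₂),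
      nw = TensorProduct.map₂ pre₁ pre₂ →
      ne = TensorProduct.map₂ pre₁ suc₂ →
      sw = TensorProduct.map₂ suc₁ pre₂ →
      se = TensorProduct.map₂ suc₁ suc₂ →
      -- the nine quadri-algebra axioms hold on D₁ ⊗ D₂
      (∀ x y z, nw (nw x y) z = nw x (nw y z + ne y z + sw y z + se y z)) ∧
      (∀ x y z, nw (ne x y) z = ne x (nw y z + sw y z)) ∧
      (∀ x y z, ne (ne x y + nw x y) z = ne x (ne y z + se y z)) ∧
      (∀ x y z, nw (sw x y) z = sw x (ne y z + nw y z)) ∧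
      (∀ x y z, nw (se x y) z = se x (nw y z)) ∧
      (∀ x y z, ne (se x y + sw x y) z = se x (ne y z)) ∧
      (∀ x y z, sw (nw x y + sw x y) z = sw x (se y z + sw y z)) ∧
      (∀ x y z, sw (ne x y + se x y) z = se x (sw y z)) ∧
      (∀ x y z, se (nw x y + ne x y + sw x y + se x y) z = se x (se y z)) := by
  intro nw ne sw se hnw hne hsw hse
  -- generic trilinearity reduction: enough to check identities on pure tensors
  have key : ∀ F G F' G' : D₁ ⊗[K] D₂ →ₗ[K] D₁ ⊗[K] D₂ →ₗ[K] D₁ ⊗[K] D₂,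
      (∀ (a c e : D₁) (b d f : D₂),
        G (F (a ⊗ₜ[K] b) (c ⊗ₜ[K] d)) (e ⊗ₜ[K] f)
          = F' (a ⊗ₜ[K] b) (G' (c ⊗ₜ[K] d) (e ⊗ₜ[K] f))) →
      ∀ x y z, G (F x y) z = F' x (G' y z) := by
    intro F G F' G' h x y z
    induction x using TensorProduct.induction_on with
    | zero => simp
    | add x₁ x₂ ih₁ ih₂ => simp only [map_add, LinearMap.add_apply, ih₁, ih₂]
    | tmul a b =>
      induction y using TensorProduct.induction_on with
      | zero => simp
      | add y₁ y₂ ih₁ ih₂ => simp only [map_add, LinearMap.add_apply, ih₁, ih₂]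
      | tmul c d =>
        induction z using TensorProduct.induction_on with
        | zero => simp
        | add z₁ z₂ ih₁ ih₂ => simp only [map_add, LinearMap.add_apply, ih₁, ih₂]
        | tmul e f => exact h a c e b d f
  refine ⟨?_, ?_, ?_, ?_, ?_, ?_, ?_, ?_, ?_⟩
  · intro x y z
    have h := key nw nw nw (nw + ne + sw + se) (fun a c e b d f => by
      subst hnw hne hsw hse
      simp only [LinearMap.add_apply, map₂_apply_tmul, map_tmul, map_add, tmul_add, add_tmul,
        h11, h12, h21, h22, ← h13, ← h23]
      try abel) x y z
    simpa only [LinearMap.add_apply] using h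
  · intro x y z
    have h := key ne nw ne (nw + sw) (fun a c e b d f => by
      subst hnw hne hsw hse
      simp only [LinearMap.add_apply, map₂_apply_tmul, map_tmul, map_add, tmul_add, add_tmul,
        h11, h12, h21, h22, ← h13, ← h23]
      try abel) x y z
    simpa only [LinearMap.add_apply] using h
  · intro x y z
    have h := key (ne + nw) ne ne (ne + se) (fun a c e b d f => by
      subst hnw hne hsw hse
      simp only [LinearMap.add_apply, map₂_apply_tmul, map_tmul, map_add, tmul_add, add_tmul,
        h11, h12, h21, h22, ← h13, ← h23]
      try abel) x y z
    simpa only [LinearMap.add_apply] using h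
  · intro x y z
    have h := key sw nw sw (ne + nw) (fun a c e b d f => by
      subst hnw hne hsw hse
      simp only [LinearMap.add_apply, map₂_apply_tmul, map_tmul, map_add, tmul_add, add_tmul,
        h11, h12, h21, h22, ← h13, ← h23]
      try abel) x y z
    simpa only [LinearMap.add_apply] using h
  · intro x y z
    have h := key se nw se nw (fun a c e b d f => by
      subst hnw hne hsw hse
      simp only [LinearMap.add_apply, map₂_apply_tmul, map_tmul, map_add, tmul_add, add_tmul,
        h11, h12, h21, h22, ← h13, ← h23]
      try abel) x y z
    simpa only [LinearMap.add_apply] using h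
  · intro x y z
    have h := key (se + sw) ne se ne (fun a c e b d f => by
      subst hnw hne hsw hse
      simp only [LinearMap.add_apply, map₂_apply_tmul, map_tmul, map_add, tmul_add, add_tmul,
        h11, h12, h21, h22, ← h13, ← h23]
      try abel) x y z
    simpa only [LinearMap.add_apply] using h
  · intro x y z
    have h := key (nw + sw) sw sw (se + sw) (fun a c e b d f => by
      subst hnw hne hsw hse
      simp only [LinearMap.add_apply, map₂_apply_tmul, map_tmul, map_add, tmul_add, add_tmul,
        h11, h12, h21, h22, ← h13, ← h23]
      try abel) x y z
    simpa only [LinearMap.add_apply] using h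
  · intro x y z
    have h := key (ne + se) sw se sw (fun a c e b d f => by
      subst hnw hne hsw hse
      simp only [LinearMap.add_apply, map₂_apply_tmul, map_tmul, map_add, tmul_add, add_tmul,
        h11, h12, h21, h22, ← h13, ← h23]
      try abel) x y z
    simpa only [LinearMap.add_apply] using h
  · intro x y z
    have h := key (nw + ne + sw + se) se se se (fun a c e b d f => by
      subst hnw hne hsw hse
      simp only [LinearMap.add_apply, map₂_apply_tmul, map_tmul, map_add, tmul_add, add_tmul,
        h11, h12, h21, h22, ← h13, ← h23]
      try abel) x y z
    simpa only [LinearMap.add_apply] using h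
end

section
/- In a quadri-algebra, the operations (≺, ≻) with ≺ = ↖+↙ and ≻ = ↗+↘ form a dendriform dialgebra structure. -/
/-- In a quadri-algebra, `≺ = ↖+↙` and `≻ = ↗+↘` form a dendriform dialgebra. -/
theorem quadri_horizontal_dendriform {K A : Type*} [Field K] [AddCommGroup A] [Module K A]
    (nw ne sw se : A →ₗ[K] A →ₗ[K] A)
    (q1 : ∀ x y z : A, nw (nw x y) z = nw x (nw y z + ne y z + sw y z + se y z))
    (q2 : ∀ x y z : A, nw (ne x y) z = ne x (nw y z + sw y z))
    (q3 : ∀ x y z : A, ne (ne x y + nw x y) z = ne x (ne y z + se y z))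
    (q4 : ∀ x y z : A, nw (sw x y) z = sw x (ne y z + nw y z))
    (q5 : ∀ x y z : A, nw (se x y) z = se x (nw y z))
    (q6 : ∀ x y z : A, ne (se x y + sw x y) z = se x (ne y z))
    (q7 : ∀ x y z : A, sw (nw x y + sw x y) z = sw x (se y z + sw y z))
    (q8 : ∀ x y z : A, sw (ne x y + se x y) z = se x (sw y z))
    (q9 : ∀ x y z : A, se (nw x y + ne x y + sw x y + se x y) z = se x (se y z)) :
    -- with  x≺y := nw x y + sw x y  and  x≻y := ne x y + se x y :
    (∀ x y z : A, nw (nw x y + sw x y) z + sw (nw x y + sw x y) z =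
        nw x ((nw y z + sw y z) + (ne y z + se y z)) + sw x ((nw y z + sw y z) + (ne y z + se y z)))
    ∧ (∀ x y z : A, nw (ne x y + se x y) z + sw (ne x y + se x y) z =
        ne x (nw y z + sw y z) + se x (nw y z + sw y z))
    ∧ (∀ x y z : A, ne ((nw x y + sw x y) + (ne x y + se x y)) z
          + se ((nw x y + sw x y) + (ne x y + se x y)) z =
        ne x (ne y z + se y z) + se x (ne y z + se y z)) := by
  refine ⟨fun x y z => ?_, fun x y z => ?_, fun x y z => ?_⟩
  · have h1 := q1 x y z; have h4 := q4 x y z; have h7 := q7 x y z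
    simp only [map_add, LinearMap.add_apply] at *
    linear_combination (norm := abel) h1 + h4 + h7
  · have h2 := q2 x y z; have h5 := q5 x y z; have h8 := q8 x y z
    simp only [map_add, LinearMap.add_apply] at *
    linear_combination (norm := abel) h2 + h5 + h8
  · have h3 := q3 x y z; have h6 := q6 x y z; have h9 := q9 x y z
    simp only [map_add, LinearMap.add_apply] at *
    linear_combination (norm := abel) h3 + h6 + h9
end

section
/- In a quadri-algebra, the operations (∧, ∨) with ∧ = ↗+↖ and ∨ = ↘+↙ form a dendriform dialgebra structure. -/
/-- In a quadri-algebra, `∧ = ↗+↖` and `∨ = ↘+↙` form a dendriform dialgebra. -/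
theorem quadri_vertical_dendriform {K A : Type*} [Field K] [AddCommGroup A] [Module K A]
    (nw ne sw se : A →ₗ[K] A →ₗ[K] A)
    (q1 : ∀ x y z : A, nw (nw x y) z = nw x (nw y z + ne y z + sw y z + se y z))
    (q2 : ∀ x y z : A, nw (ne x y) z = ne x (nw y z + sw y z))
    (q3 : ∀ x y z : A, ne (ne x y + nw x y) z = ne x (ne y z + se y z))
    (q4 : ∀ x y z : A, nw (sw x y) z = sw x (ne y z + nw y z))
    (q5 : ∀ x y z : A, nw (se x y) z = se x (nw y z))
    (q6 : ∀ x y z : A, ne (se x y + sw x y) z = se x (ne y z))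
    (q7 : ∀ x y z : A, sw (nw x y + sw x y) z = sw x (se y z + sw y z))
    (q8 : ∀ x y z : A, sw (ne x y + se x y) z = se x (sw y z))
    (q9 : ∀ x y z : A, se (nw x y + ne x y + sw x y + se x y) z = se x (se y z)) :
    -- with  x∧y := ne x y + nw x y  and  x∨y := se x y + sw x y :
    (∀ x y z : A, ne (ne x y + nw x y) z + nw (ne x y + nw x y) z =
        ne x ((ne y z + nw y z) + (se y z + sw y z)) + nw x ((ne y z + nw y z) + (se y z + sw y z)))
    ∧ (∀ x y z : A, ne (se x y + sw x y) z + nw (se x y + sw x y) z =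
        se x (ne y z + nw y z) + sw x (ne y z + nw y z))
    ∧ (∀ x y z : A, se ((ne x y + nw x y) + (se x y + sw x y)) z
          + sw ((ne x y + nw x y) + (se x y + sw x y)) z =
        se x (se y z + sw y z) + sw x (se y z + sw y z)) := by
  refine ⟨fun x y z => ?_, fun x y z => ?_, fun x y z => ?_⟩
  · calc ne (ne x y + nw x y) z + nw (ne x y + nw x y) z
        = ne (ne x y + nw x y) z + (nw (ne x y) z + nw (nw x y) z) := by
          simp only [map_add, LinearMap.add_apply]
      _ = ne x (ne y z + se y z) + (ne x (nw y z + sw y z)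
            + nw x (nw y z + ne y z + sw y z + se y z)) := by rw [q3, q2, q1]
      _ = _ := by simp only [map_add]; abel
  · calc ne (se x y + sw x y) z + nw (se x y + sw x y) z
        = ne (se x y + sw x y) z + (nw (se x y) z + nw (sw x y) z) := by
          simp only [map_add, LinearMap.add_apply]
      _ = se x (ne y z) + (se x (nw y z) + sw x (ne y z + nw y z)) := by rw [q6, q5, q4]
      _ = _ := by simp only [map_add]; abel
  · calc se (ne x y + nw x y + (se x y + sw x y)) z
          + sw (ne x y + nw x y + (se x y + sw x y)) z
        = se (nw x y + ne x y + sw x y + se x y) z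
            + (sw (nw x y + sw x y) z + sw (ne x y + se x y) z) := by
          simp only [map_add, LinearMap.add_apply]; abel
      _ = se x (se y z) + (sw x (se y z + sw y z) + se x (sw y z)) := by rw [q9, q7, q8]
      _ = _ := by simp only [map_add]; abel
end

section
/- Let A be an associative algebra and P : A → A a linear Rota-Baxter operator of weight 0, i.e. P(x)P(y) = P(P(x)y + xP(y)) for all x, y. Define x≺y := xP(y) and x≻y := P(x)y. Then (A, ≺, ≻) is a dendriform dialgebra. -/
/-- A weight-0 Rota-Baxter operator on an associative algebra yields
a dendriform dialgebra with `x≺y = x·P(y)`, `x≻y = P(x)·y`. -/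
theorem rotaBaxter_weight_zero_dendriform {K A : Type*} [Field K] [Ring A] [Algebra K A]
    (P : A →ₗ[K] A)
    (hP : ∀ x y : A, P x * P y = P (P x * y + x * P y)) :
    (∀ x y z : A, (x * P y) * P z = x * P (y * P z + P y * z)) ∧
    (∀ x y z : A, (P x * y) * P z = P x * (y * P z)) ∧
    (∀ x y z : A, P (x * P y + P x * y) * z = P x * (P y * z)) := by
  refine ⟨fun x y z => ?_, fun x y z => mul_assoc _ _ _, fun x y z => ?_⟩
  · rw [mul_assoc, hP y z, add_comm]
  · rw [add_comm, ← hP x y, mul_assoc]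
end

section
/- Let A be an associative algebra and P : A → A a Rota-Baxter operator of weight λ, i.e. P(x)P(y) = P(P(x)y + xP(y) + λxy) for all x, y. Define x≺y := xP(y), x≻y := P(x)y, and x∘y := λxy. Then (A, ≺, ≻, ∘) is a dendriform trialgebra. -/
/-- A weight-λ Rota-Baxter operator on an associative algebra yields a
dendriform trialgebra with `x≺y = x·P(y)`, `x≻y = P(x)·y`, `x∘y = λ·(x·y)`. -/
theorem rotaBaxter_weight_trialgebra {K A : Type*} [Field K] [Ring A] [Algebra K A]
    (l : K) (P : A →ₗ[K] A)
    (hP : ∀ x y : A, P x * P y = P (P x * y + x * P y + l • (x * y))) :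
    (∀ x y z : A, (x * P y) * P z = x * P (y * P z + P y * z + l • (y * z))) ∧
    (∀ x y z : A, (P x * y) * P z = P x * (y * P z)) ∧
    (∀ x y z : A, P (x * P y + P x * y + l • (x * y)) * z = P x * (P y * z)) ∧
    (∀ x y z : A, l • ((P x * y) * z) = P x * (l • (y * z))) ∧
    (∀ x y z : A, l • ((x * P y) * z) = l • (x * (P y * z))) ∧
    (∀ x y z : A, (l • (x * y)) * P z = l • (x * (y * P z))) ∧
    (∀ x y z : A, l • ((l • (x * y)) * z) = l • (x * (l • (y * z)))) := by
  refine ⟨?_, ?_, ?_, ?_, ?_, ?_, ?_⟩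
  · intro x y z
    rw [mul_assoc, hP y z, add_comm (P y * z) (y * P z)]
  · intro x y z; rw [mul_assoc]
  · intro x y z
    have := hP x y
    rw [add_comm (P x * y) (x * P y)] at this
    rw [← this, mul_assoc]
  · intro x y z; rw [mul_smul_comm, mul_assoc]
  · intro x y z; rw [mul_assoc]
  · intro x y z; rw [smul_mul_assoc, mul_assoc]
  · intro x y z
    rw [smul_mul_assoc, mul_smul_comm, mul_assoc]
end

section
/- Let A be an associative algebra and N : A → A a Nijenhuis operator, i.e. N(x)N(y) = N(N(x)y + xN(y) − N(xy)) for all x, y. Define x≺y := xN(y), x≻y := N(x)y, and x•y := −N(xy). Then (A, ≺, ≻, •) is an NS-algebra. -/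
/-- A Nijenhuis operator on an associative algebra yields an NS-algebra
with `x≺y = x·N(y)`, `x≻y = N(x)·y`, `x•y = −N(x·y)`. -/
theorem nijenhuis_NS_algebra {K A : Type*} [Field K] [Ring A] [Algebra K A]
    (N : A →ₗ[K] A)
    (hN : ∀ x y : A, N x * N y = N (N x * y + x * N y - N (x * y))) :
    (∀ x y z : A, (x * N y) * N z = x * N (y * N z + N y * z + -N (y * z))) ∧
    (∀ x y z : A, (N x * y) * N z = N x * (y * N z)) ∧
    (∀ x y z : A, N (x * N y + N x * y + -N (x * y)) * z = N x * (N y * z)) ∧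
    (∀ x y z : A,
      -N ((x * N y + N x * y + -N (x * y)) * z) + (-N (x * y)) * N z =
        N x * (-N (y * z)) + -N (x * (y * N z + N y * z + -N (y * z)))) := by
  refine ⟨?_, ?_, ?_, ?_⟩
  · intro x y z
    rw [mul_assoc, hN y z]
    congr 1
    congr 1
    abel
  · intro x y z
    rw [mul_assoc]
  · intro x y z
    rw [show x * N y + N x * y + -N (x * y) = N x * y + x * N y - N (x * y) by abel,
      ← hN x y, mul_assoc]
  · intro x y z
    have h1 := hN (x * y) z
    have h2 := hN x (y * z)
    rw [neg_mul, mul_neg, h1, h2]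
    simp only [map_add, map_neg, map_sub, add_mul, mul_add, sub_mul, mul_sub, neg_add,
      neg_neg, neg_sub, neg_mul, mul_neg, mul_assoc]
    abel
end

section
/- Let A be an associative algebra with two commuting Rota-Baxter operators P₁, P₂ of weight 0 (P₁P₂ = P₂P₁, and each Pᵢ satisfies Pᵢ(x)Pᵢ(y) = Pᵢ(Pᵢ(x)y + xPᵢ(y))). First use P₂ to get a dendriform dialgebra (x≺y = xP₂(y), x≻y = P₂(x)y), then use P₁ (which is a Rota-Baxter operator of weight 0 on this dendriform dialgebra) to define x↖y := x≺P₁(y), x↗y := x≻P₁(y), x↙y := P₁(x)≺y, x↘y := P₁(x)≻y. Then (A, ↖, ↗, ↙, ↘) is a quadri-algebra. -/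
/-- Two commuting weight-0 Rota-Baxter operators `P₁, P₂` on an associative
algebra give a quadri-algebra with `x↖y = x·P₂(P₁ y)`, `x↗y = P₂(x)·P₁(y)`,
`x↙y = P₁(x)·P₂(y)`, `x↘y = P₂(P₁(x))·y`. -/
theorem two_rotaBaxter_quadri {K A : Type*} [Field K] [Ring A] [Algebra K A]
    (P₁ P₂ : A →ₗ[K] A)
    (hcomm : ∀ x : A, P₁ (P₂ x) = P₂ (P₁ x))
    (hP₁ : ∀ x y : A, P₁ x * P₁ y = P₁ (P₁ x * y + x * P₁ y))
    (hP₂ : ∀ x y : A, P₂ x * P₂ y = P₂ (P₂ x * y + x * P₂ y)) :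
    ∀ (nw ne sw se : A → A → A),
      (∀ x y, nw x y = x * P₂ (P₁ y)) →
      (∀ x y, ne x y = P₂ x * P₁ y) →
      (∀ x y, sw x y = P₁ x * P₂ y) →
      (∀ x y, se x y = P₂ (P₁ x) * y) →
      -- the nine quadri-algebra axioms
      (∀ x y z, nw (nw x y) z = nw x (nw y z + ne y z + sw y z + se y z)) ∧
      (∀ x y z, nw (ne x y) z = ne x (nw y z + sw y z)) ∧
      (∀ x y z, ne (ne x y + nw x y) z = ne x (ne y z + se y z)) ∧
      (∀ x y z, nw (sw x y) z = sw x (ne y z + nw y z)) ∧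
      (∀ x y z, nw (se x y) z = se x (nw y z)) ∧
      (∀ x y z, ne (se x y + sw x y) z = se x (ne y z)) ∧
      (∀ x y z, sw (nw x y + sw x y) z = sw x (se y z + sw y z)) ∧
      (∀ x y z, sw (ne x y + se x y) z = se x (sw y z)) ∧
      (∀ x y z, se (nw x y + ne x y + sw x y + se x y) z = se x (se y z)) := by
  intro nw ne sw se hnw hne hsw hse
  have hA : ∀ y z : A, P₂ (P₁ y) * P₁ z = P₁ (P₂ y * P₁ z + P₂ (P₁ y) * z) := by
    intro y z
    rw [← hcomm, hP₁, add_comm (P₁ (P₂ y) * z)]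
  have hB : ∀ y z : A, P₁ y * P₂ (P₁ z) = P₁ (y * P₂ (P₁ z) + P₁ y * P₂ z) := by
    intro y z
    rw [← hcomm, hP₁, add_comm (P₁ y * P₂ z)]
  have key : ∀ x y : A, P₂ (P₁ x) * P₂ (P₁ y) =
      P₂ (P₁ (x * P₂ (P₁ y) + P₂ x * P₁ y + P₁ x * P₂ y + P₂ (P₁ x) * y)) := by
    intro x y
    rw [hP₂, hA, hB, ← map_add]
    congr 2
    abel
  have h7 : ∀ x y : A, P₁ (x * P₂ (P₁ y) + P₁ x * P₂ y) = P₁ x * P₂ (P₁ y) := by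
    intro x y
    rw [← hcomm, add_comm, ← hP₁]
  have h8 : ∀ x y : A, P₁ (P₂ x * P₁ y + P₂ (P₁ x) * y) = P₂ (P₁ x) * P₁ y := by
    intro x y
    rw [← hcomm, add_comm, ← hP₁]
  simp only [hnw, hne, hsw, hse]
  refine ⟨?_, ?_, ?_, ?_, ?_, ?_, ?_, ?_, ?_⟩ <;> intro x y z
  · rw [mul_assoc, key]
  · rw [mul_assoc, hB]
  · rw [← hP₂, mul_assoc, hA]
  · rw [mul_assoc, hP₂]
  · rw [mul_assoc]
  · rw [← hP₂, mul_assoc]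
  · rw [h7, mul_assoc, hP₂]
  · rw [h8, mul_assoc]
  · rw [← key, mul_assoc]
end

section
/- Let (D, ≺, ≻, ∘) be a dendriform trialgebra and P : D → D a Rota-Baxter operator of weight λ for each operation (P(x)⊙P(y) = P(P(x)⊙y + x⊙P(y) + λ x⊙y) for ⊙ ∈ {≺, ≻, ∘}). Then the nine operations x(⊙,≺')y := x⊙P(y), x(⊙,≻')y := P(x)⊙y, x(⊙,∘')y := λ x⊙y, for ⊙ ∈ {≺,≻,∘}, define an ennea-algebra structure on D, i.e. they satisfy all 49 relations of the square product of the trialgebra type with itself: for each trialgebra relation Σⱼ(x ⊙ᵃⱼ y) ⊙ᵇⱼ z = Σⱼ x ⊙ᶜⱼ (y ⊙ᵈⱼ z) and each trialgebra relation in the second factor, the corresponding paired relation holds. -/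
/-- The seven dendriform trialgebra relations, encoded formally: operations are indexed
by `Fin 3` (`0 = ≺`, `1 = ≻`, `2 = ∘`), and a relation `(L, R)` means
`∑_{(a,b) ∈ L} (x ⊙ₐ y) ⊙_b z = ∑_{(c,d) ∈ R} x ⊙_c (y ⊙_d z)`
(with `⋆ = ≺ + ≻ + ∘` already expanded into sums). -/
def triRels : Fin 7 → List (Fin 3 × Fin 3) × List (Fin 3 × Fin 3) :=
  ![⟨[(0, 0)], [(0, 0), (0, 1), (0, 2)]⟩,                -- (≺⊗≺, ≺⊗⋆)
    ⟨[(1, 0)], [(1, 0)]⟩,                                -- (≻⊗≺, ≻⊗≺)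
    ⟨[(0, 1), (1, 1), (2, 1)], [(1, 1)]⟩,                -- (⋆⊗≻, ≻⊗≻)
    ⟨[(1, 2)], [(1, 2)]⟩,                                -- (≻⊗∘, ≻⊗∘)
    ⟨[(0, 2)], [(2, 1)]⟩,                                -- (≺⊗∘, ∘⊗≻)
    ⟨[(2, 0)], [(2, 0)]⟩,                                -- (∘⊗≺, ∘⊗≺)
    ⟨[(2, 2)], [(2, 2)]⟩]                                -- (∘⊗∘, ∘⊗∘)

/-- The nine ennea-algebra operations built from trialgebra operations `ops : Fin 3 → _`,
a linear operator `P` and a weight `l`: the second index `0 = ≺'` gives `x ⊙ P(y)`,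
`1 = ≻'` gives `P(x) ⊙ y`, and `2 = ∘'` gives `l • (x ⊙ y)`. -/
def enneaOp {K D : Type*} [Field K] [AddCommGroup D] [Module K D]
    (ops : Fin 3 → D →ₗ[K] D →ₗ[K] D) (P : D →ₗ[K] D) (l : K) :
    Fin 3 × Fin 3 → D → D → D :=
  fun ij =>
    ![fun x y => ops ij.1 x (P y),
      fun x y => ops ij.1 (P x) y,
      fun x y => l • ops ij.1 x y] ij.2

set_option maxHeartbeats 4000000 in
/-- A Rota-Baxter operator `P` of weight `λ` (for each operation) on a
dendriform trialgebra `(D, ≺, ≻, ∘)` makes `D` an ennea-algebra via the nine operations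
`x(⊙,≺')y = x ⊙ P(y)`, `x(⊙,≻')y = P(x) ⊙ y`, `x(⊙,∘')y = λ•(x ⊙ y)`: all 49 relations
of the square product of the trialgebra type with itself hold. -/
theorem rotaBaxter_on_trialgebra_ennea {K D : Type*} [Field K] [AddCommGroup D] [Module K D]
    (pre suc cir : D →ₗ[K] D →ₗ[K] D)
    (h1 : ∀ x y z : D, pre (pre x y) z = pre x (pre y z + suc y z + cir y z))
    (h2 : ∀ x y z : D, pre (suc x y) z = suc x (pre y z))
    (h3 : ∀ x y z : D, suc (pre x y + suc x y + cir x y) z = suc x (suc y z))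
    (h4 : ∀ x y z : D, cir (suc x y) z = suc x (cir y z))
    (h5 : ∀ x y z : D, cir (pre x y) z = cir x (suc y z))
    (h6 : ∀ x y z : D, pre (cir x y) z = cir x (pre y z))
    (h7 : ∀ x y z : D, cir (cir x y) z = cir x (cir y z))
    (l : K) (P : D →ₗ[K] D)
    (hPpre : ∀ x y : D, pre (P x) (P y) = P (pre (P x) y + pre x (P y) + l • pre x y))
    (hPsuc : ∀ x y : D, suc (P x) (P y) = P (suc (P x) y + suc x (P y) + l • suc x y))
    (hPcir : ∀ x y : D, cir (P x) (P y) = P (cir (P x) y + cir x (P y) + l • cir x y)) :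
    ∀ r s : Fin 7, ∀ x y z : D,
      (((triRels r).1.product (triRels s).1).map
        (fun p => enneaOp ![pre, suc, cir] P l (p.1.2, p.2.2)
                    (enneaOp ![pre, suc, cir] P l (p.1.1, p.2.1) x y) z)).sum =
      (((triRels r).2.product (triRels s).2).map
        (fun p => enneaOp ![pre, suc, cir] P l (p.1.1, p.2.1) x
                    (enneaOp ![pre, suc, cir] P l (p.1.2, p.2.2) y z))).sum := by
  
  intro r s x y z
  have H1 : ∀ u v w : D, pre (pre u v) w
      = pre u (pre v w) + (pre u (suc v w) + pre u (cir v w)) := fun u v w => by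
    rw [h1]; simp only [map_add, add_assoc]
  have H2 := h2
  have H3 : ∀ u v w : D, suc (pre u v) w + (suc (suc u v) w + suc (cir u v) w)
      = suc u (suc v w) := fun u v w => by
    rw [← h3]; simp only [map_add, LinearMap.add_apply, add_assoc]
  have H4 := h4
  have H5 := h5
  have H6 := h6
  have H7 := h7
  fin_cases r <;> fin_cases s
  · show pre (pre x (P y)) (P z) + (0) = pre x (P (pre y (P z))) + (pre x (P (pre (P y) z)) + (pre x (P (l • pre y z)) + (pre x (P (suc y (P z))) + (pre x (P (suc (P y) z)) + (pre x (P (l • suc y z)) + (pre x (P (cir y (P z))) + (pre x (P (cir (P y) z)) + (pre x (P (l • cir y z)) + (0)))))))))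
    simp only [add_zero]
    rw [H1 x (P y) (P z)]
    simp only [hPpre, hPsuc, hPcir, map_add, map_smul, LinearMap.add_apply, LinearMap.smul_apply]
    abel
  · show pre (pre (P x) y) (P z) + (0) = pre (P x) (pre y (P z)) + (pre (P x) (suc y (P z)) + (pre (P x) (cir y (P z)) + (0)))
    simp only [add_zero]
    exact H1 (P x) y (P z)
  · show pre (P (pre x (P y))) z + (pre (P (pre (P x) y)) z + (pre (P (l • pre x y)) z + (0))) = pre (P x) (pre (P y) z) + (pre (P x) (suc (P y) z) + (pre (P x) (cir (P y) z) + (0)))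
    simp only [add_zero]
    rw [← H1 (P x) (P y) z]
    simp only [hPpre, hPsuc, hPcir, map_add, map_smul, LinearMap.add_apply, LinearMap.smul_apply]
    abel
  · show l • pre (pre (P x) y) z + (0) = pre (P x) (l • pre y z) + (pre (P x) (l • suc y z) + (pre (P x) (l • cir y z) + (0)))
    simp only [add_zero, map_smul, LinearMap.smul_apply, ← smul_add]
    rw [H1 (P x) y z]
  · show l • pre (pre x (P y)) z + (0) = l • pre x (pre (P y) z) + (l • pre x (suc (P y) z) + (l • pre x (cir (P y) z) + (0)))
    simp only [add_zero, map_smul, LinearMap.smul_apply, ← smul_add]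
    rw [H1 x (P y) z]
  · show pre (l • pre x y) (P z) + (0) = l • pre x (pre y (P z)) + (l • pre x (suc y (P z)) + (l • pre x (cir y (P z)) + (0)))
    simp only [add_zero, map_smul, LinearMap.smul_apply, ← smul_add]
    rw [H1 x y (P z)]
  · show l • pre (l • pre x y) z + (0) = l • pre x (l • pre y z) + (l • pre x (l • suc y z) + (l • pre x (l • cir y z) + (0)))
    simp only [add_zero, map_smul, LinearMap.smul_apply, ← smul_add]
    rw [H1 x y z]
  · show pre (suc x (P y)) (P z) + (0) = suc x (P (pre y (P z))) + (suc x (P (pre (P y) z)) + (suc x (P (l • pre y z)) + (0)))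
    simp only [add_zero]
    rw [H2 x (P y) (P z)]
    simp only [hPpre, hPsuc, hPcir, map_add, map_smul, LinearMap.add_apply, LinearMap.smul_apply]
    abel
  · show pre (suc (P x) y) (P z) + (0) = suc (P x) (pre y (P z)) + (0)
    simp only [add_zero]
    exact H2 (P x) y (P z)
  · show pre (P (suc x (P y))) z + (pre (P (suc (P x) y)) z + (pre (P (l • suc x y)) z + (0))) = suc (P x) (pre (P y) z) + (0)
    simp only [add_zero]
    rw [← H2 (P x) (P y) z]
    simp only [hPpre, hPsuc, hPcir, map_add, map_smul, LinearMap.add_apply, LinearMap.smul_apply]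
    abel
  · show l • pre (suc (P x) y) z + (0) = suc (P x) (l • pre y z) + (0)
    simp only [add_zero, map_smul, LinearMap.smul_apply, ← smul_add]
    rw [H2 (P x) y z]
  · show l • pre (suc x (P y)) z + (0) = l • suc x (pre (P y) z) + (0)
    simp only [add_zero, map_smul, LinearMap.smul_apply, ← smul_add]
    rw [H2 x (P y) z]
  · show pre (l • suc x y) (P z) + (0) = l • suc x (pre y (P z)) + (0)
    simp only [add_zero, map_smul, LinearMap.smul_apply, ← smul_add]
    rw [H2 x y (P z)]
  · show l • pre (l • suc x y) z + (0) = l • suc x (l • pre y z) + (0)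
    simp only [add_zero, map_smul, LinearMap.smul_apply, ← smul_add]
    rw [H2 x y z]
  · show suc (pre x (P y)) (P z) + (suc (suc x (P y)) (P z) + (suc (cir x (P y)) (P z) + (0))) = suc x (P (suc y (P z))) + (suc x (P (suc (P y) z)) + (suc x (P (l • suc y z)) + (0)))
    simp only [add_zero]
    rw [H3 x (P y) (P z)]
    simp only [hPpre, hPsuc, hPcir, map_add, map_smul, LinearMap.add_apply, LinearMap.smul_apply]
    abel
  · show suc (pre (P x) y) (P z) + (suc (suc (P x) y) (P z) + (suc (cir (P x) y) (P z) + (0))) = suc (P x) (suc y (P z)) + (0)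
    simp only [add_zero]
    exact H3 (P x) y (P z)
  · show suc (P (pre x (P y))) z + (suc (P (pre (P x) y)) z + (suc (P (l • pre x y)) z + (suc (P (suc x (P y))) z + (suc (P (suc (P x) y)) z + (suc (P (l • suc x y)) z + (suc (P (cir x (P y))) z + (suc (P (cir (P x) y)) z + (suc (P (l • cir x y)) z + (0))))))))) = suc (P x) (suc (P y) z) + (0)
    simp only [add_zero]
    rw [← H3 (P x) (P y) z]
    simp only [hPpre, hPsuc, hPcir, map_add, map_smul, LinearMap.add_apply, LinearMap.smul_apply]
    abel
  · show l • suc (pre (P x) y) z + (l • suc (suc (P x) y) z + (l • suc (cir (P x) y) z + (0))) = suc (P x) (l • suc y z) + (0)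
    simp only [add_zero, map_smul, LinearMap.smul_apply, ← smul_add]
    rw [H3 (P x) y z]
  · show l • suc (pre x (P y)) z + (l • suc (suc x (P y)) z + (l • suc (cir x (P y)) z + (0))) = l • suc x (suc (P y) z) + (0)
    simp only [add_zero, map_smul, LinearMap.smul_apply, ← smul_add]
    rw [H3 x (P y) z]
  · show suc (l • pre x y) (P z) + (suc (l • suc x y) (P z) + (suc (l • cir x y) (P z) + (0))) = l • suc x (suc y (P z)) + (0)
    simp only [add_zero, map_smul, LinearMap.smul_apply, ← smul_add]
    rw [H3 x y (P z)]
  · show l • suc (l • pre x y) z + (l • suc (l • suc x y) z + (l • suc (l • cir x y) z + (0))) = l • suc x (l • suc y z) + (0)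
    simp only [add_zero, map_smul, LinearMap.smul_apply, ← smul_add]
    rw [H3 x y z]
  · show cir (suc x (P y)) (P z) + (0) = suc x (P (cir y (P z))) + (suc x (P (cir (P y) z)) + (suc x (P (l • cir y z)) + (0)))
    simp only [add_zero]
    rw [H4 x (P y) (P z)]
    simp only [hPpre, hPsuc, hPcir, map_add, map_smul, LinearMap.add_apply, LinearMap.smul_apply]
    abel
  · show cir (suc (P x) y) (P z) + (0) = suc (P x) (cir y (P z)) + (0)
    simp only [add_zero]
    exact H4 (P x) y (P z)
  · show cir (P (suc x (P y))) z + (cir (P (suc (P x) y)) z + (cir (P (l • suc x y)) z + (0))) = suc (P x) (cir (P y) z) + (0)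
    simp only [add_zero]
    rw [← H4 (P x) (P y) z]
    simp only [hPpre, hPsuc, hPcir, map_add, map_smul, LinearMap.add_apply, LinearMap.smul_apply]
    abel
  · show l • cir (suc (P x) y) z + (0) = suc (P x) (l • cir y z) + (0)
    simp only [add_zero, map_smul, LinearMap.smul_apply, ← smul_add]
    rw [H4 (P x) y z]
  · show l • cir (suc x (P y)) z + (0) = l • suc x (cir (P y) z) + (0)
    simp only [add_zero, map_smul, LinearMap.smul_apply, ← smul_add]
    rw [H4 x (P y) z]
  · show cir (l • suc x y) (P z) + (0) = l • suc x (cir y (P z)) + (0)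
    simp only [add_zero, map_smul, LinearMap.smul_apply, ← smul_add]
    rw [H4 x y (P z)]
  · show l • cir (l • suc x y) z + (0) = l • suc x (l • cir y z) + (0)
    simp only [add_zero, map_smul, LinearMap.smul_apply, ← smul_add]
    rw [H4 x y z]
  · show cir (pre x (P y)) (P z) + (0) = cir x (P (suc y (P z))) + (cir x (P (suc (P y) z)) + (cir x (P (l • suc y z)) + (0)))
    simp only [add_zero]
    rw [H5 x (P y) (P z)]
    simp only [hPpre, hPsuc, hPcir, map_add, map_smul, LinearMap.add_apply, LinearMap.smul_apply]
    abel
  · show cir (pre (P x) y) (P z) + (0) = cir (P x) (suc y (P z)) + (0)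
    simp only [add_zero]
    exact H5 (P x) y (P z)
  · show cir (P (pre x (P y))) z + (cir (P (pre (P x) y)) z + (cir (P (l • pre x y)) z + (0))) = cir (P x) (suc (P y) z) + (0)
    simp only [add_zero]
    rw [← H5 (P x) (P y) z]
    simp only [hPpre, hPsuc, hPcir, map_add, map_smul, LinearMap.add_apply, LinearMap.smul_apply]
    abel
  · show l • cir (pre (P x) y) z + (0) = cir (P x) (l • suc y z) + (0)
    simp only [add_zero, map_smul, LinearMap.smul_apply, ← smul_add]
    rw [H5 (P x) y z]
  · show l • cir (pre x (P y)) z + (0) = l • cir x (suc (P y) z) + (0)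
    simp only [add_zero, map_smul, LinearMap.smul_apply, ← smul_add]
    rw [H5 x (P y) z]
  · show cir (l • pre x y) (P z) + (0) = l • cir x (suc y (P z)) + (0)
    simp only [add_zero, map_smul, LinearMap.smul_apply, ← smul_add]
    rw [H5 x y (P z)]
  · show l • cir (l • pre x y) z + (0) = l • cir x (l • suc y z) + (0)
    simp only [add_zero, map_smul, LinearMap.smul_apply, ← smul_add]
    rw [H5 x y z]
  · show pre (cir x (P y)) (P z) + (0) = cir x (P (pre y (P z))) + (cir x (P (pre (P y) z)) + (cir x (P (l • pre y z)) + (0)))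
    simp only [add_zero]
    rw [H6 x (P y) (P z)]
    simp only [hPpre, hPsuc, hPcir, map_add, map_smul, LinearMap.add_apply, LinearMap.smul_apply]
    abel
  · show pre (cir (P x) y) (P z) + (0) = cir (P x) (pre y (P z)) + (0)
    simp only [add_zero]
    exact H6 (P x) y (P z)
  · show pre (P (cir x (P y))) z + (pre (P (cir (P x) y)) z + (pre (P (l • cir x y)) z + (0))) = cir (P x) (pre (P y) z) + (0)
    simp only [add_zero]
    rw [← H6 (P x) (P y) z]
    simp only [hPpre, hPsuc, hPcir, map_add, map_smul, LinearMap.add_apply, LinearMap.smul_apply]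
    abel
  · show l • pre (cir (P x) y) z + (0) = cir (P x) (l • pre y z) + (0)
    simp only [add_zero, map_smul, LinearMap.smul_apply, ← smul_add]
    rw [H6 (P x) y z]
  · show l • pre (cir x (P y)) z + (0) = l • cir x (pre (P y) z) + (0)
    simp only [add_zero, map_smul, LinearMap.smul_apply, ← smul_add]
    rw [H6 x (P y) z]
  · show pre (l • cir x y) (P z) + (0) = l • cir x (pre y (P z)) + (0)
    simp only [add_zero, map_smul, LinearMap.smul_apply, ← smul_add]
    rw [H6 x y (P z)]
  · show l • pre (l • cir x y) z + (0) = l • cir x (l • pre y z) + (0)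
    simp only [add_zero, map_smul, LinearMap.smul_apply, ← smul_add]
    rw [H6 x y z]
  · show cir (cir x (P y)) (P z) + (0) = cir x (P (cir y (P z))) + (cir x (P (cir (P y) z)) + (cir x (P (l • cir y z)) + (0)))
    simp only [add_zero]
    rw [H7 x (P y) (P z)]
    simp only [hPpre, hPsuc, hPcir, map_add, map_smul, LinearMap.add_apply, LinearMap.smul_apply]
    abel
  · show cir (cir (P x) y) (P z) + (0) = cir (P x) (cir y (P z)) + (0)
    simp only [add_zero]
    exact H7 (P x) y (P z)
  · show cir (P (cir x (P y))) z + (cir (P (cir (P x) y)) z + (cir (P (l • cir x y)) z + (0))) = cir (P x) (cir (P y) z) + (0)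
    simp only [add_zero]
    rw [← H7 (P x) (P y) z]
    simp only [hPpre, hPsuc, hPcir, map_add, map_smul, LinearMap.add_apply, LinearMap.smul_apply]
    abel
  · show l • cir (cir (P x) y) z + (0) = cir (P x) (l • cir y z) + (0)
    simp only [add_zero, map_smul, LinearMap.smul_apply, ← smul_add]
    rw [H7 (P x) y z]
  · show l • cir (cir x (P y)) z + (0) = l • cir x (cir (P y) z) + (0)
    simp only [add_zero, map_smul, LinearMap.smul_apply, ← smul_add]
    rw [H7 x (P y) z]
  · show cir (l • cir x y) (P z) + (0) = l • cir x (cir y (P z)) + (0)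
    simp only [add_zero, map_smul, LinearMap.smul_apply, ← smul_add]
    rw [H7 x y (P z)]
  · show l • cir (l • cir x y) z + (0) = l • cir x (l • cir y z) + (0)
    simp only [add_zero, map_smul, LinearMap.smul_apply, ← smul_add]
    rw [H7 x y z]
end

section
/- Let (D, ≺, ≻) be a dendriform dialgebra and P : D → D a Rota-Baxter operator of weight 0 for both operations (P(x)⊙P(y) = P(P(x)⊙y + x⊙P(y)) for ⊙ ∈ {≺, ≻}). Define x↖y := x≺P(y), x↙y := x≻P(y), x↗y := P(x)≺y, x↘y := P(x)≻y, with the convention x(⊙,≺')y = x⊙P(y) and x(⊙,≻')y = P(x)⊙y for ⊙ ∈ {≺,≻}. Then the four operations x(≺,≺')y = x≺P(y), x(≺,≻')y = P(x)≺y, x(≻,≺')y = x≻P(y), x(≻,≻')y = P(x)≻y form a quadri-algebra on D (under the identification ↖ = (≺,≺'), ↗ = (≺,≻'), ↙ = (≻,≺'), ↘ = (≻,≻')). -/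
/-- A weight-0 Rota-Baxter operator `P` (for both operations) on a
dendriform dialgebra `(D,≺,≻)` yields a quadri-algebra with
`x↖y = x≺P(y)`, `x↗y = P(x)≺y`, `x↙y = x≻P(y)`, `x↘y = P(x)≻y`. -/
theorem rotaBaxter_on_dendriform_quadri {K D : Type*} [Field K] [AddCommGroup D] [Module K D]
    (pre suc : D →ₗ[K] D →ₗ[K] D)
    (h1 : ∀ x y z : D, pre (pre x y) z = pre x (pre y z + suc y z))
    (h2 : ∀ x y z : D, pre (suc x y) z = suc x (pre y z))
    (h3 : ∀ x y z : D, suc (pre x y + suc x y) z = suc x (suc y z))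
    (P : D →ₗ[K] D)
    (hPpre : ∀ x y : D, pre (P x) (P y) = P (pre (P x) y + pre x (P y)))
    (hPsuc : ∀ x y : D, suc (P x) (P y) = P (suc (P x) y + suc x (P y))) :
    ∀ (nw ne sw se : D → D → D),
      (∀ x y, nw x y = pre x (P y)) →
      (∀ x y, ne x y = pre (P x) y) →
      (∀ x y, sw x y = suc x (P y)) →
      (∀ x y, se x y = suc (P x) y) →
      -- the nine quadri-algebra axioms
      (∀ x y z, nw (nw x y) z = nw x (nw y z + ne y z + sw y z + se y z)) ∧
      (∀ x y z, nw (ne x y) z = ne x (nw y z + sw y z)) ∧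
      (∀ x y z, ne (ne x y + nw x y) z = ne x (ne y z + se y z)) ∧
      (∀ x y z, nw (sw x y) z = sw x (ne y z + nw y z)) ∧
      (∀ x y z, nw (se x y) z = se x (nw y z)) ∧
      (∀ x y z, ne (se x y + sw x y) z = se x (ne y z)) ∧
      (∀ x y z, sw (nw x y + sw x y) z = sw x (se y z + sw y z)) ∧
      (∀ x y z, sw (ne x y + se x y) z = se x (sw y z)) ∧
      (∀ x y z, se (nw x y + ne x y + sw x y + se x y) z = se x (se y z)) := by
  intro nw ne sw se hnw hne hsw hse
  refine ⟨?_, ?_, ?_, ?_, ?_, ?_, ?_, ?_, ?_⟩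
  · intro x y z
    simp only [hnw, hne, hsw, hse]
    rw [h1, hPpre, hPsuc, ← map_add]
    congr 1; congr 1; abel
  · intro x y z
    simp only [hnw, hne, hsw, hse]
    rw [h1]
  · intro x y z
    simp only [hnw, hne, hsw, hse]
    rw [← hPpre, h1]
  · intro x y z
    simp only [hnw, hne, hsw, hse]
    rw [h2, hPpre]
  · intro x y z
    simp only [hnw, hne, hsw, hse]
    rw [h2]
  · intro x y z
    simp only [hnw, hne, hsw, hse]
    rw [← hPsuc, h2]
  · intro x y z
    simp only [hnw, hne, hsw, hse]
    rw [h3, hPsuc]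
  · intro x y z
    simp only [hnw, hne, hsw, hse]
    rw [h3]
  · intro x y z
    simp only [hnw, hne, hsw, hse]
    rw [show pre x (P y) + pre (P x) y + suc x (P y) + suc (P x) y
        = (pre (P x) y + pre x (P y)) + (suc (P x) y + suc x (P y)) by abel,
      map_add, ← hPpre, ← hPsuc, h3]
end

section
/- Let A be an associative algebra and P a Rota-Baxter operator of weight λ on A. Define x≺y := xP(y) and x≻y := −P̃(x)y where P̃ := −λ·id − P (so x≻y = λxy + P(x)y). Then (A, ≺, ≻) is a dendriform dialgebra. -/
/-- If `P` is a Rota-Baxter operator of weight `λ` on an associative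
algebra, then `x≺y := x·P(y)` and `x≻y := −P̃(x)·y = P(x)·y + λ·(x·y)` (with
`P̃ = −λ·id − P`) give a dendriform dialgebra. -/
theorem rotaBaxter_mixed_dendriform {K A : Type*} [Field K] [Ring A] [Algebra K A]
    (l : K) (P : A →ₗ[K] A)
    (hP : ∀ x y : A, P x * P y = P (P x * y + x * P y + l • (x * y))) :
    -- (x≺y)≺z = x≺(y≺z + y≻z)
    (∀ x y z : A, (x * P y) * P z = x * P (y * P z + (P y * z + l • (y * z)))) ∧
    -- (x≻y)≺z = x≻(y≺z)
    (∀ x y z : A, (P x * y + l • (x * y)) * P z =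
        P x * (y * P z) + l • (x * (y * P z))) ∧
    -- (x≺y + x≻y)≻z = x≻(y≻z)
    (∀ x y z : A,
      P (x * P y + (P x * y + l • (x * y))) * z
        + l • ((x * P y + (P x * y + l • (x * y))) * z) =
      P x * (P y * z + l • (y * z)) + l • (x * (P y * z + l • (y * z)))) := by
  refine ⟨?_, ?_, ?_⟩
  · intro x y z
    rw [mul_assoc, hP y z,
      show y * P z + (P y * z + l • (y * z)) = P y * z + y * P z + l • (y * z) by module]
  · intro x y z
    simp only [add_mul, smul_mul_assoc, mul_assoc]
  · intro x y z
    have key : P (x * P y + (P x * y + l • (x * y))) = P x * P y := by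
      rw [hP x y]; congr 1; module
    rw [key]
    simp only [mul_add, add_mul, smul_mul_assoc, mul_smul_comm, mul_assoc, smul_add,
      smul_smul]
    module
end
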